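/- (Best approximation) Let z ∈ Ĥ and let p, q ∈ Ā with q ≠ 0 satisfy ν(z - p/q) > -2ν(q) = 2 deg(q). Then p/q equals an approximant x_n(z) of z for some n ≥ 0. -/

import Mathlib

universe u

/-- Evaluation of a finite continued fraction `[f₀, f₁, …, f_N]` in a field,
`cfEval [a] = a`, `cfEval (a :: l) = a + (cfEval l)⁻¹` (with the convention `0⁻¹ = 0`). -/
def cfEval {L : Type u} [Field L] : List L → L
  | [] => 0
  | a :: l => a + (cfEval l)⁻¹

/-- The Moebius maps `ρ_n = σ_n ∘ ⋯ ∘ σ_0`, where `σ_i x = (x - f_i)⁻¹`. -/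
def rho {L : Type u} [Field L] (f : ℕ → L) : ℕ → L → L
  | 0, x => (x - f 0)⁻¹
  | n + 1, x => (rho f n x - f (n + 1))⁻¹

/-- The derivative `ρ_n'` of `ρ_n`, computed by the chain rule from
`σ_i'(x) = -((x - f_i)⁻¹)²`. -/
def rho' {L : Type u} [Field L] (f : ℕ → L) : ℕ → L → L
  | 0, x => -((x - f 0)⁻¹) ^ 2
  | n + 1, x => -((rho f n x - f (n + 1))⁻¹) ^ 2 * rho' f n x

/-- An abstract presentation of the completion `K̂` of the Puiseux field
`E⟨⟨t⁻¹⟩⟩` over a field `E`.  The field `K` carries an additive valuation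
`ν` with values in `ℚ` on nonzero elements (normalized by `ν (t^r) = -r`,
where `mono r` plays the role of the monomial `t^r`), the subfield `E` is
embedded via `emb`, the simple "Laurent Puiseux polynomials" (the ring
generated by `E` and all rational powers of `t`) are dense, and `K` is
complete for `ν`. -/
structure PuiseuxCompletion (E : Type u) [Field E] where
  K : Type u
  [fieldK : Field K]
  ν : K → ℚ
  emb : E →+* K
  mono : ℚ → K
  mono_zero : mono 0 = 1
  mono_mul : ∀ r s : ℚ, mono r * mono s = mono (r + s)
  ν_mono : ∀ r : ℚ, ν (mono r) = -r
  ν_emb : ∀ e : E, e ≠ 0 → ν (emb e) = 0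
  ν_mul : ∀ x y : K, x ≠ 0 → y ≠ 0 → ν (x * y) = ν x + ν y
  ν_add : ∀ x y : K, x ≠ 0 → y ≠ 0 → x + y ≠ 0 → min (ν x) (ν y) ≤ ν (x + y)
  dense' : ∀ z : K, ∀ C : ℚ,
    ∃ f ∈ Subring.closure (Set.range emb ∪ Set.range mono), z = f ∨ C < ν (z - f)
  complete' : ∀ uSeq : ℕ → K,
    (∀ C : ℚ, ∃ N : ℕ, ∀ m ≥ N, ∀ n ≥ N, uSeq m = uSeq n ∨ C < ν (uSeq m - uSeq n)) →
    ∃ z : K, ∀ C : ℚ, ∃ N : ℕ, ∀ n ≥ N, uSeq n = z ∨ C < ν (uSeq n - z)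

attribute [instance] PuiseuxCompletion.fieldK

namespace PuiseuxCompletion

variable {E : Type u} [Field E] (P : PuiseuxCompletion E)

/-- The ring `Ā = E⟨t⟩` of Puiseux polynomials: finite `E`-linear combinations of
nonnegative rational powers of `t`. -/
def Abar : Subring P.K :=
  Subring.closure (Set.range P.emb ∪ P.mono '' {r : ℚ | 0 ≤ r})

/-- `deg f = -ν f`. -/
def deg (f : P.K) : ℚ := -P.ν f

/-- The rational Puiseux field `k̃ = Quot(Ā) = ⋃ₙ E(t^{1/n})`, as a subfield of `K̂`. -/
def ktilde : Subfield P.K := Subfield.closure (P.Abar : Set P.K)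

/-- `uSeq n → z` with respect to the valuation `ν`. -/
def TendsTo (uSeq : ℕ → P.K) (z : P.K) : Prop :=
  ∀ C : ℚ, ∃ N : ℕ, ∀ n ≥ N, uSeq n = z ∨ C < P.ν (uSeq n - z)

/-- One step of the continued fraction algorithm succeeds at index `i`:
`f i` is the Puiseux polynomial with `ν (z_i - f i) > 0`, the fraction does not
end at `i` (`z_i ≠ f i`), and `z_{i+1} = (z_i - f i)⁻¹`. -/
def CFStep (f zs : ℕ → P.K) (i : ℕ) : Prop :=
  f i ∈ P.Abar ∧ 0 < P.ν (zs i - f i) ∧ zs i ≠ f i ∧ zs (i + 1) = (zs i - f i)⁻¹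

/-- The `n`-th approximant `x_n = [f₀, …, f_n]_{ev}`. -/
def approx (f : ℕ → P.K) (n : ℕ) : P.K :=
  cfEval (List.ofFn fun i : Fin (n + 1) => f i)

/-- The continued fraction of `z` begins with the coefficients `f 0, …, f n`. -/
def CFBegins (f : ℕ → P.K) (n : ℕ) (z : P.K) : Prop :=
  ∃ zs : ℕ → P.K, zs 0 = z ∧ (∀ i < n, P.CFStep f zs i) ∧
    f n ∈ P.Abar ∧ (zs n = f n ∨ 0 < P.ν (zs n - f n))

/-- `z` is the value of the continued fraction expression with coefficients `f`
and length `L` (finite or infinite); the coefficients are Puiseux polynomials of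
positive degree after the zeroth one. -/
def CFExprEval (f : ℕ → P.K) (L : WithTop ℕ) (z : P.K) : Prop :=
  f 0 ∈ P.Abar ∧
  (∀ i : ℕ, 1 ≤ i → (i : WithTop ℕ) ≤ L → f i ∈ P.Abar ∧ 0 < P.deg (f i)) ∧
  ((∃ N : ℕ, L = (N : WithTop ℕ) ∧ z = P.approx f N) ∨
    (L = ⊤ ∧ P.TendsTo (fun n => P.approx f n) z))

/-- The equivalence relation `(a, r) ~ (a', r')` iff `r = r'` and `ν (a - a') ≥ r`
(the pairs define the same Berkovich point `η_{a,r}` of type II or III). -/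
def ballEquiv (p q : P.K × ℝ) : Prop :=
  p.2 = q.2 ∧ (p.1 = q.1 ∨ p.2 ≤ (P.ν (p.1 - q.1) : ℝ))

open scoped Classical in
/-- The Berkovich hyperbolic distance, computed on representatives. -/
noncomputable def berkDist (p q : P.K × ℝ) : ℝ :=
  if p.1 = q.1 ∨ min p.2 q.2 ≤ (P.ν (p.1 - q.1) : ℝ) then |p.2 - q.2|
  else p.2 + q.2 - 2 * (P.ν (p.1 - q.1) : ℝ)

/-- The closed ball `B_a^{[r]} = {b : ν (b - a) ≥ r}` corresponding to `η_{a,r}`. -/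
def closedBall (a : P.K) (r : ℝ) : Set P.K :=
  {b : P.K | b = a ∨ r ≤ (P.ν (b - a) : ℝ)}

/-- The Moebius transformation associated to a `2 × 2` matrix. -/
def mob (g : Matrix (Fin 2) (Fin 2) P.K) (x : P.K) : P.K :=
  (g 0 0 * x + g 0 1) / (g 1 0 * x + g 1 1)

/-- The ring `A_M = E[t^{1/M}]`. -/
def AM (M : ℕ) : Subring P.K :=
  Subring.closure (Set.range P.emb ∪ {P.mono (1 / (M : ℚ))})

/-- The field `E(t^{1/M})`, whose `ν`-completion inside `K̂` is `K_M = E((t^{-1/M}))`. -/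
def kM (M : ℕ) : Subfield P.K :=
  Subfield.closure (Set.range P.emb ∪ {P.mono (1 / (M : ℚ))})

end PuiseuxCompletion


/-!
Clear denominators so that `p` and `q` are polynomials in `t^{1/M}`, and divide: `p = q s + r`
with `deg r < deg q`. With `u = r/q` and `w = z - p/q` we have `0 < ν u ≤ 2 deg q < ν w`, so
`z - s = u + w` has valuation `ν u > 0`: the continued fraction of `z` starts with `s`. The
complete quotient `(z - s)⁻¹` differs from `u⁻¹ = q/r` by `-w / ((u + w) u)`, of valuation
`ν w - 2 ν u > 2 deg r`. Hence `(z - s)⁻¹` and `q/r` satisfy the hypothesis again, with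
`deg r < deg q`, and we conclude by induction (when `r = 0`, `p/q = s` is the zeroth approximant).
-/

namespace PuiseuxCompletion

open Polynomial

variable {E : Type u} [Field E] (P : PuiseuxCompletion E)

theorem ν_one : P.ν 1 = 0 := by
  have h := P.ν_mul 1 1 one_ne_zero one_ne_zero
  rw [one_mul] at h
  linarith

theorem ν_inv {x : P.K} (hx : x ≠ 0) : P.ν x⁻¹ = -P.ν x := by
  have h := P.ν_mul x x⁻¹ hx (inv_ne_zero hx)
  rw [mul_inv_cancel₀ hx, P.ν_one] at h
  linarith

theorem ν_div {x y : P.K} (hx : x ≠ 0) (hy : y ≠ 0) : P.ν (x / y) = P.ν x - P.ν y := by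
  rw [div_eq_mul_inv, P.ν_mul x y⁻¹ hx (inv_ne_zero hy), P.ν_inv hy, sub_eq_add_neg]

theorem ν_neg (x : P.K) : P.ν (-x) = P.ν x := by
  obtain rfl | hx := eq_or_ne x 0
  · rw [neg_zero]
  have h := P.ν_mul (-1) (-1) (by norm_num) (by norm_num)
  rw [neg_mul_neg, one_mul, P.ν_one] at h
  rw [← neg_one_mul, P.ν_mul _ _ (by norm_num) hx]
  linarith

theorem add_ne_zero_of_ν_lt {a b : P.K} (h : P.ν a < P.ν b) : a + b ≠ 0 := by
  intro hab
  rw [eq_neg_of_add_eq_zero_left hab, P.ν_neg] at h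
  exact h.false

theorem ν_add_eq_of_lt {a b : P.K} (ha : a ≠ 0) (hb : b ≠ 0) (h : P.ν a < P.ν b) :
    P.ν (a + b) = P.ν a := by
  have hab := P.add_ne_zero_of_ν_lt h
  refine le_antisymm ?_ (min_eq_left h.le ▸ P.ν_add a b ha hb hab)
  by_contra! hlt
  have h' := P.ν_add (a + b) (-b) hab (neg_ne_zero.mpr hb) (by rwa [add_neg_cancel_right])
  rw [add_neg_cancel_right, P.ν_neg] at h'
  rcases min_le_iff.mp h' with h' | h' <;> linarith

theorem ν_inv_add_sub_inv {u w : P.K} (hu : u ≠ 0) (hw : w ≠ 0) (h : P.ν u < P.ν w) :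
    P.ν ((u + w)⁻¹ - u⁻¹) = P.ν w - 2 * P.ν u := by
  have huw := P.add_ne_zero_of_ν_lt h
  have hid : (u + w)⁻¹ - u⁻¹ = -w / ((u + w) * u) := by
    field_simp
    ring
  rw [hid, P.ν_div (neg_ne_zero.mpr hw) (mul_ne_zero huw hu), P.ν_neg, P.ν_mul _ _ huw hu,
    P.ν_add_eq_of_lt hu hw h]
  ring

-- The case `x = y` stands in for `ν (x - y) = ∞`, since `ν 0` is a junk value.
def Near (C : ℚ) (x y : P.K) : Prop :=
  x = y ∨ C < P.ν (x - y)

theorem near_inv_sub_inv {C : ℚ} {z s u : P.K} (hu : u ≠ 0) (hνu : 0 < P.ν u)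
    (hC : P.ν u ≤ C) (hz : P.Near C z (s + u)) :
    z ≠ s ∧ 0 < P.ν (z - s) ∧ P.Near (C - 2 * P.ν u) (z - s)⁻¹ u⁻¹ := by
  obtain ⟨w, rfl⟩ : ∃ w, z = s + (u + w) := ⟨z - (s + u), by ring⟩
  rw [add_sub_cancel_left, ne_eq, add_eq_left]
  rw [Near, ← add_assoc, add_sub_cancel_left, add_eq_left] at hz
  obtain rfl | hw := eq_or_ne w 0
  · rw [add_zero]
    exact ⟨hu, hνu, Or.inl rfl⟩
  have hlt : P.ν u < P.ν w := hC.trans_lt (hz.resolve_left hw)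
  refine ⟨P.add_ne_zero_of_ν_lt hlt, (P.ν_add_eq_of_lt hu hw hlt).symm ▸ hνu, Or.inr ?_⟩
  rw [P.ν_inv_add_sub_inv hu hw hlt]
  linarith [hz.resolve_left hw]

theorem mono_ne_zero (r : ℚ) : P.mono r ≠ 0 := by
  intro h
  have h' := P.mono_mul r (-r)
  rw [h, zero_mul, add_neg_cancel, P.mono_zero] at h'
  exact zero_ne_one h'

theorem mono_pow (r : ℚ) (n : ℕ) : P.mono r ^ n = P.mono (n * r) := by
  induction n with
  | zero => rw [pow_zero, Nat.cast_zero, zero_mul, P.mono_zero]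
  | succ n ih =>
    rw [pow_succ, ih, P.mono_mul]
    congr 1
    push_cast
    ring

noncomputable def evalRoot (M : ℕ) : E[X] →+* P.K :=
  eval₂RingHom P.emb (P.mono (1 / M))

theorem evalRoot_C_mul_X_pow (M : ℕ) (a : E) (d : ℕ) :
    P.evalRoot M (C a * X ^ d) = P.emb a * P.mono (d / M) := by
  rw [evalRoot, map_mul, map_pow, coe_eval₂RingHom, eval₂_C, eval₂_X, P.mono_pow, mul_one_div]

theorem evalRoot_mem_Abar (M : ℕ) (g : E[X]) : P.evalRoot M g ∈ P.Abar := by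
  induction g using Polynomial.induction_on' with
  | add g h hg hh => exact map_add (P.evalRoot M) g h ▸ add_mem hg hh
  | monomial d a =>
    rw [← C_mul_X_pow_eq_monomial, evalRoot_C_mul_X_pow]
    exact mul_mem (Subring.subset_closure (Or.inl ⟨a, rfl⟩))
      (Subring.subset_closure (Or.inr ⟨_, Set.mem_ofPred.mpr (by positivity), rfl⟩))

theorem evalRoot_ne_zero_and_deg_eq {M : ℕ} (hM : 0 < M) {g : E[X]} (hg : g ≠ 0) :
    P.evalRoot M g ≠ 0 ∧ P.deg (P.evalRoot M g) = g.natDegree / M := by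
  refine induction_with_natDegree_le
    (fun g => g ≠ 0 → P.evalRoot M g ≠ 0 ∧ P.deg (P.evalRoot M g) = g.natDegree / M)
    g.natDegree (fun h => absurd rfl h) ?_ ?_ g le_rfl hg
  · intro d a ha _ _
    have hemb : P.emb a ≠ 0 := (map_ne_zero P.emb).mpr ha
    rw [evalRoot_C_mul_X_pow, natDegree_C_mul_X_pow d a ha]
    refine ⟨mul_ne_zero hemb (P.mono_ne_zero _), ?_⟩
    rw [deg, P.ν_mul _ _ hemb (P.mono_ne_zero _), P.ν_emb a ha, P.ν_mono, zero_add, neg_neg]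
  · intro f g hfg _ ihf ihg _
    obtain ⟨hg0, hgdeg⟩ := ihg (ne_zero_of_natDegree_gt hfg)
    rw [natDegree_add_eq_right_of_natDegree_lt hfg, map_add]
    obtain rfl | hf := eq_or_ne f 0
    · rw [map_zero, zero_add]
      exact ⟨hg0, hgdeg⟩
    obtain ⟨hf0, hfdeg⟩ := ihf hf
    have hlt : P.ν (P.evalRoot M g) < P.ν (P.evalRoot M f) := by
      have h : P.deg (P.evalRoot M f) < P.deg (P.evalRoot M g) := by
        rw [hfdeg, hgdeg]
        gcongr
      rw [deg, deg] at h
      linarith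
    rw [add_comm, deg, P.ν_add_eq_of_lt hg0 hf0 hlt]
    exact ⟨P.add_ne_zero_of_ν_lt hlt, hgdeg⟩

theorem evalRoot_mul_comp_X_pow {M N : ℕ} (hM : 0 < M) (hN : 0 < N) (g : E[X]) :
    P.evalRoot (M * N) (g.comp (X ^ N)) = P.evalRoot M g := by
  simp only [evalRoot, coe_eval₂RingHom, eval₂_comp, eval₂_X_pow, P.mono_pow]
  congr 2
  push_cast
  field_simp

theorem exists_evalRoot_eq_pair {x y : P.K} (hx : ∃ M, 0 < M ∧ ∃ g, x = P.evalRoot M g)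
    (hy : ∃ N, 0 < N ∧ ∃ h, y = P.evalRoot N h) :
    ∃ M, 0 < M ∧ ∃ g h, x = P.evalRoot M g ∧ y = P.evalRoot M h := by
  obtain ⟨M, hM, g, rfl⟩ := hx
  obtain ⟨N, hN, h, rfl⟩ := hy
  refine ⟨M * N, Nat.mul_pos hM hN, g.comp (X ^ N), h.comp (X ^ M), ?_, ?_⟩
  · rw [P.evalRoot_mul_comp_X_pow hM hN]
  · rw [mul_comm, P.evalRoot_mul_comp_X_pow hN hM]

theorem exists_evalRoot_eq_of_mem_Abar {x : P.K} (hx : x ∈ P.Abar) :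
    ∃ M, 0 < M ∧ ∃ g, x = P.evalRoot M g := by
  induction hx using Subring.closure_induction with
  | mem x hx =>
    rcases hx with ⟨a, rfl⟩ | ⟨r, hr, rfl⟩
    · exact ⟨1, one_pos, C a, (eval₂_C _ _).symm⟩
    · have hnum : ((r.num.toNat : ℕ) : ℚ) = r.num := by
        exact_mod_cast Int.toNat_of_nonneg (Rat.num_nonneg.mpr hr)
      refine ⟨r.den, r.pos, X ^ r.num.toNat, ?_⟩
      rw [← one_mul (X ^ _), ← C_1, evalRoot_C_mul_X_pow, map_one, one_mul, hnum,
        Rat.num_div_den]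
  | zero => exact ⟨1, one_pos, 0, (map_zero _).symm⟩
  | one => exact ⟨1, one_pos, 1, (map_one _).symm⟩
  | add x y _ _ hx hy =>
    obtain ⟨M, hM, g, h, rfl, rfl⟩ := P.exists_evalRoot_eq_pair hx hy
    exact ⟨M, hM, g + h, (map_add _ g h).symm⟩
  | neg x _ hx =>
    obtain ⟨M, hM, g, rfl⟩ := hx
    exact ⟨M, hM, -g, (map_neg _ g).symm⟩
  | mul x y _ _ hx hy =>
    obtain ⟨M, hM, g, h, rfl, rfl⟩ := P.exists_evalRoot_eq_pair hx hy
    exact ⟨M, hM, g * h, (map_mul _ g h).symm⟩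

theorem approx_zero (f : ℕ → P.K) : P.approx f 0 = f 0 := by
  simp [approx, cfEval]

theorem approx_succ (f : ℕ → P.K) (n : ℕ) :
    P.approx f (n + 1) = f 0 + (P.approx (fun i => f (i + 1)) n)⁻¹ := by
  simp [approx, List.ofFn_succ, cfEval]

def IsApproximant (z x : P.K) : Prop :=
  ∃ n f, P.CFBegins f n z ∧ x = P.approx f n

theorem isApproximant_of_mem_Abar {z x : P.K} (hx : x ∈ P.Abar) (hz : P.Near 0 z x) :
    P.IsApproximant z x :=
  ⟨0, fun _ => x, ⟨fun _ => z, rfl, fun i hi => absurd hi i.not_lt_zero, hx, hz⟩,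
    (P.approx_zero fun _ => x).symm⟩

theorem isApproximant_add_inv {z s y : P.K} (hs : s ∈ P.Abar) (hzs : z ≠ s)
    (hν : 0 < P.ν (z - s)) (hy : P.IsApproximant (z - s)⁻¹ y) :
    P.IsApproximant z (s + y⁻¹) := by
  obtain ⟨n, f, ⟨zs, h0, hsteps, hfn, hzn⟩, rfl⟩ := hy
  refine ⟨n + 1, fun | 0 => s | i + 1 => f i,
    ⟨fun | 0 => z | i + 1 => zs i, rfl, ?_, hfn, hzn⟩,
    (P.approx_succ (fun | 0 => s | i + 1 => f i) n).symm⟩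
  rintro (_ | i) hi
  · exact ⟨hs, hν, hzs, h0⟩
  · exact hsteps i (by omega)

theorem isApproximant_evalRoot_div {M : ℕ} (hM : 0 < M) {g h : E[X]} (hh : h ≠ 0) {z : P.K}
    (hz : P.Near (2 * P.deg (P.evalRoot M h)) z (P.evalRoot M g / P.evalRoot M h)) :
    P.IsApproximant z (P.evalRoot M g / P.evalRoot M h) := by
  induction hd : h.natDegree using Nat.strong_induction_on generalizing g h z with
  | _ d ih =>
  obtain ⟨hh0, hhdeg⟩ := P.evalRoot_ne_zero_and_deg_eq hM hh
  have hdiv : P.evalRoot M g / P.evalRoot M h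
      = P.evalRoot M (g / h) + P.evalRoot M (g % h) / P.evalRoot M h := by
    conv_lhs => rw [← EuclideanDomain.div_add_mod g h]
    rw [map_add, map_mul, add_div, mul_div_cancel_left₀ _ hh0]
  rw [hdiv] at hz ⊢
  obtain hr | hr := eq_or_ne (g % h) 0
  · have hdeg : 0 ≤ P.deg (P.evalRoot M h) := hhdeg ▸ by positivity
    rw [hr, map_zero, zero_div, add_zero] at hz ⊢
    exact P.isApproximant_of_mem_Abar (P.evalRoot_mem_Abar M _)
      (hz.imp_right fun hνz => by linarith)
  obtain ⟨hr0, hrdeg⟩ := P.evalRoot_ne_zero_and_deg_eq hM hr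
  have hlt : (g % h).natDegree < h.natDegree :=
    natDegree_lt_natDegree hr (EuclideanDomain.mod_lt g hh)
  have hdeg_lt : P.deg (P.evalRoot M (g % h)) < P.deg (P.evalRoot M h) := by
    rw [hrdeg, hhdeg]
    gcongr
  have hdeg_nonneg : 0 ≤ P.deg (P.evalRoot M (g % h)) := hrdeg ▸ by positivity
  have hνu : P.ν (P.evalRoot M (g % h) / P.evalRoot M h)
      = P.deg (P.evalRoot M h) - P.deg (P.evalRoot M (g % h)) := by
    rw [P.ν_div hr0 hh0, deg, deg]
    ring
  obtain ⟨hzs, hνzs, hnear⟩ := P.near_inv_sub_inv (div_ne_zero hr0 hh0)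
    (by linarith) (by linarith) hz
  have hC : 2 * P.deg (P.evalRoot M h) - 2 * P.ν (P.evalRoot M (g % h) / P.evalRoot M h)
      = 2 * P.deg (P.evalRoot M (g % h)) := by
    rw [hνu]
    ring
  rw [hC, inv_div] at hnear
  simpa only [inv_div] using P.isApproximant_add_inv (P.evalRoot_mem_Abar M _) hzs hνzs
    (ih _ (hd ▸ hlt) hr hnear rfl)

end PuiseuxCompletion

open PuiseuxCompletion in
/-- best approximation: if `p, q ∈ Ā`, `q ≠ 0` and
`ν (z - p/q) > 2 deg q = -2 ν q`, then `p/q` is an approximant `x_n(z)`. -/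
theorem statement12 {E : Type u} [Field E] (P : PuiseuxCompletion E)
    (z p q : P.K) (hp : p ∈ P.Abar) (hq : q ∈ P.Abar) (hq0 : q ≠ 0)
    (h : z = p / q ∨ 2 * P.deg q < P.ν (z - p / q)) :
    ∃ (n : ℕ) (f zs : ℕ → P.K), zs 0 = z ∧ (∀ i < n, P.CFStep f zs i) ∧
      f n ∈ P.Abar ∧ (zs n = f n ∨ 0 < P.ν (zs n - f n)) ∧
      p / q = P.approx f n := by
  obtain ⟨M, hM, gp, gq, rfl, rfl⟩ := P.exists_evalRoot_eq_pair
    (P.exists_evalRoot_eq_of_mem_Abar hp) (P.exists_evalRoot_eq_of_mem_Abar hq)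
  have hgq : gq ≠ 0 := by
    rintro rfl
    exact hq0 (map_zero _)
  obtain ⟨n, f, ⟨zs, h0, hsteps, hfn, hzn⟩, happrox⟩ :=
    P.isApproximant_evalRoot_div hM hgq h
  exact ⟨n, f, zs, h0, hsteps, hfn, hzn, happrox⟩
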